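/- Let P : C^op → Pos be a slat-doctrine over a category C with finite products such that each fibre P(X) has binary meets and each reindexing map P_f preserves them. Then each fibre P^ex(A) of the existential completion has binary meets, given by (A,B,β) ∧ (A,C,γ) = (A, B×C, P_{⟨pr_A,pr_B⟩}(β) ∧ P_{⟨pr_A,pr_C⟩}(γ)), where the pr's are the projections from A×B×C; that is, this element is a greatest lower bound of (A,B,β) and (A,C,γ) in P^ex(A). -/

import Mathlib

open CategoryTheory CategoryTheory.Limits Opposite

universe u v

variable {C : Type u} [Category.{v} C] [HasFiniteProducts C]

/-- The fibre of a slat-doctrine `P : Cᵒᵖ ⥤ Pos` over an object `X` of `C`. -/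
abbrev Fib (P : Cᵒᵖ ⥤ PartOrd) (X : C) : Type _ := (P.obj (op X) : Type _)

/-- Reindexing along `f : X ⟶ Y` (the monotone map `P f : P Y → P X`). -/
def rIdx (P : Cᵒᵖ ⥤ PartOrd) {X Y : C} (f : X ⟶ Y) (a : Fib P Y) : Fib P X :=
  (P.map f.op).hom.toFun a

/-- Objects of the fibre of a quantifier completion over `A`: triples `(A, B, α)`
with `α ∈ P (A × B)` (the component `A` being fixed). -/
abbrev QObj (P : Cᵒᵖ ⥤ PartOrd) (A : C) : Type _ := Σ B : C, Fib P (A ⨯ B)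

/-- The order of the universal completion `P^un`:
`(A,B,α) ≤ (A,C,γ)` iff there is `g : A×C ⟶ B` with `P⟨pr_A,g⟩(α) ≤ γ`. -/
def UnLe (P : Cᵒᵖ ⥤ PartOrd) {A : C} (x y : QObj P A) : Prop :=
  ∃ g : A ⨯ y.1 ⟶ x.1, rIdx P (prod.lift prod.fst g) x.2 ≤ y.2

/-- The order of the existential completion `P^ex`:
`(A,B,α) ≤ (A,C,γ)` iff there is `f : A×B ⟶ C` with `α ≤ P⟨pr_A,f⟩(γ)`. -/
def ExLe (P : Cᵒᵖ ⥤ PartOrd) {A : C} (x y : QObj P A) : Prop :=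
  ∃ f : A ⨯ x.1 ⟶ y.1, x.2 ≤ rIdx P (prod.lift prod.fst f) y.2

/-- Reindexing of the completions along `f : X ⟶ Y`: `(Y,D,δ) ↦ (X,D,P_{f×1}(δ))`. -/
noncomputable def QReindex (P : Cᵒᵖ ⥤ PartOrd) {X Y : C} (f : X ⟶ Y) (y : QObj P Y) :
    QObj P X :=
  ⟨y.1, rIdx P (prod.map f (𝟙 y.1)) y.2⟩

/-- The candidate binary meet in `P^ex(A)`:
`(A,B,β) ∧ (A,C,γ) = (A, B×C, P⟨pr_A,pr_B⟩(β) ∧ P⟨pr_A,pr_C⟩(γ))`. -/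
noncomputable def exMeet (P : Cᵒᵖ ⥤ PartOrd)
    (inf : ∀ X : C, Fib P X → Fib P X → Fib P X) {A : C} (x y : QObj P A) : QObj P A :=
  ⟨x.1 ⨯ y.1,
    inf (A ⨯ (x.1 ⨯ y.1))
      (rIdx P (prod.lift prod.fst (prod.snd ≫ prod.fst)) x.2)
      (rIdx P (prod.lift prod.fst (prod.snd ≫ prod.snd)) y.2)⟩

theorem rIdx_comp {D : Type*} [Category D] (P : Dᵒᵖ ⥤ PartOrd) {X Y Z : D} (f : X ⟶ Y)
    (g : Y ⟶ Z) (a : Fib P Z) : rIdx P f (rIdx P g a) = rIdx P (f ≫ g) a := by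
  simp only [rIdx, op_comp, P.map_comp]
  rfl

section Pairing

variable {D : Type*} [Category D] [HasBinaryProducts D] {W A X Y : D}

theorem prod_lift_lift_comp_lift_fst_snd_fst (a : W ⟶ A) (f : W ⟶ X) (g : W ⟶ Y) :
    prod.lift a (prod.lift f g) ≫ prod.lift prod.fst (prod.snd ≫ prod.fst) = prod.lift a f := by
  simp only [prod.comp_lift, prod.lift_fst, prod.lift_snd_assoc]

theorem prod_lift_lift_comp_lift_fst_snd_snd (a : W ⟶ A) (f : W ⟶ X) (g : W ⟶ Y) :
    prod.lift a (prod.lift f g) ≫ prod.lift prod.fst (prod.snd ≫ prod.snd) = prod.lift a g := by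
  simp only [prod.comp_lift, prod.lift_fst, prod.lift_snd_assoc, prod.lift_snd]

end Pairing

section ExMeet

variable (P : Cᵒᵖ ⥤ PartOrd) (inf : ∀ X : C, Fib P X → Fib P X → Fib P X) {A : C}

theorem exMeet_exLe_left (inf_le_left : ∀ (X : C) (a b : Fib P X), inf X a b ≤ a)
    (x y : QObj P A) : ExLe P (exMeet P inf x y) x :=
  ⟨prod.snd ≫ prod.fst, inf_le_left _ _ _⟩

theorem exMeet_exLe_right (inf_le_right : ∀ (X : C) (a b : Fib P X), inf X a b ≤ b)
    (x y : QObj P A) : ExLe P (exMeet P inf x y) y :=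
  ⟨prod.snd ≫ prod.snd, inf_le_right _ _ _⟩

/-- Pair the witnesses `f`, `g` of `z ≤ x` and `z ≤ y`: since reindexing preserves meets,
reindexing the meet along `⟨pr_A, ⟨f, g⟩⟩` splits into the reindexings along `⟨pr_A, f⟩`
and `⟨pr_A, g⟩`. -/
theorem exLe_exMeet (le_inf : ∀ (X : C) (c a b : Fib P X), c ≤ a → c ≤ b → c ≤ inf X a b)
    (hpres : ∀ {X Y : C} (f : X ⟶ Y) (a b : Fib P Y),
      rIdx P f (inf Y a b) = inf X (rIdx P f a) (rIdx P f b))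
    {x y z : QObj P A} (hx : ExLe P z x) (hy : ExLe P z y) : ExLe P z (exMeet P inf x y) := by
  obtain ⟨f, hf⟩ := hx
  obtain ⟨g, hg⟩ := hy
  refine ⟨prod.lift f g, ?_⟩
  simp only [exMeet, hpres, rIdx_comp, prod_lift_lift_comp_lift_fst_snd_fst,
    prod_lift_lift_comp_lift_fst_snd_snd]
  exact le_inf _ _ _ _ hf hg

end ExMeet

/-- If each fibre of `P` has binary meets preserved by reindexing, then each fibre of the
existential completion has binary meets, given by `exMeet` (a greatest lower bound). -/
theorem exCompletion_binary_meets (P : Cᵒᵖ ⥤ PartOrd)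
    (inf : ∀ X : C, Fib P X → Fib P X → Fib P X)
    (inf_le_left : ∀ (X : C) (a b : Fib P X), inf X a b ≤ a)
    (inf_le_right : ∀ (X : C) (a b : Fib P X), inf X a b ≤ b)
    (le_inf : ∀ (X : C) (c a b : Fib P X), c ≤ a → c ≤ b → c ≤ inf X a b)
    (hpres : ∀ {X Y : C} (f : X ⟶ Y) (a b : Fib P Y),
      rIdx P f (inf Y a b) = inf X (rIdx P f a) (rIdx P f b))
    (A : C) (x y : QObj P A) :
    ExLe P (exMeet P inf x y) x ∧ ExLe P (exMeet P inf x y) y ∧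
      ∀ z : QObj P A, ExLe P z x → ExLe P z y → ExLe P z (exMeet P inf x y) :=
  ⟨exMeet_exLe_left P inf inf_le_left x y, exMeet_exLe_right P inf inf_le_right x y,
    fun _ => exLe_exMeet P inf le_inf hpres⟩
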